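/- arXiv:2112.15262 — 2 statements merged into one kernel-verified Lean document; each statement's English description precedes it below -/
import Mathlib

section
/- Let r ≥ 3 and let θ_{k1}, θ_{k2} ∈ ℝ for k = 3, …, r. Put K̃ = (1/√2)[[I, I], [I, -I]] with I = I_{2^{r-2}}, and P_± = Π_{k=3}^r P_{k-1,1}^(r-1)(±θ_{k1} + θ_{k2}). Then K̃ · diag(P_+, P_-) · K̃ = Π_{k=3}^r P_{k2}^(r)(θ_{k2}) · Π_{k=3}^r [ K̃ · diag(P_{k-1,1}^(r-1)(θ_{k1}), transpose(P_{k-1,1}^(r-1)(θ_{k1}))) · K̃ ]. -/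
/-!
Common definitions for zeta functions associated with homogeneous cones
(following Nakashima, "Functional equations of zeta functions associated
with homogeneous cones"): the functions `c(z) = cos (π z / 2)`,
`s(z) = sin (π z / 2)`, the recursive ordering of the sign set
`I_r = {1,-1}^r`, the Hadamard matrices `J^(r)`, the gamma-matrix
`A_r(α; Θ)`, the matrices `C_r`, `S_r`, the diagonal matrices `D_j^(r)(α)`,
and the rotation matrices `P_{kj}^(r)(θ) = c(θ)·I + s(θ)·X_{kj}^(r)`.
Matrices indexed by `I_s` are identified with `2^s × 2^s` matrices via the
recursive ordering, which is encoded by `ord s : Fin (2^s) → (Fin s → ℤ)`,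
sending a position to the corresponding sign vector.
-/

noncomputable section
open Matrix Complex

namespace HomCone

/-- `c(z) = cos (π z / 2)`. -/
def cc (z : ℂ) : ℂ := Complex.cos (Real.pi * z / 2)

/-- `s(z) = sin (π z / 2)`. -/
def ss (z : ℂ) : ℂ := Complex.sin (Real.pi * z / 2)

/-- The recursive ordering of `I_r = {1,-1}^r`: `ord r i` is the `i`-th sign
vector of `I_r` (positions starting from `0`).  For `r+1`: the `i`-th element
of `I_{r+1}` is `(1, ε_i)` for `i < 2^r` and `(-1, -ε_{i-2^r})` otherwise,
where `ε_i` is the `i`-th element of `I_r`. -/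
def ord : (r : ℕ) → Fin (2 ^ r) → Fin r → ℤ
  | 0, _, j => j.elim0
  | r + 1, i, j =>
    if h : (i : ℕ) < 2 ^ r then
      (if _ : (j : ℕ) = 0 then 1
       else ord r ⟨(i : ℕ), h⟩ ⟨(j : ℕ) - 1, by have := j.isLt; omega⟩)
    else
      (if _ : (j : ℕ) = 0 then -1
       else - ord r ⟨(i : ℕ) - 2 ^ r, by
              have h1 := i.isLt
              have h2 : 2 ^ (r + 1) = 2 ^ r * 2 := pow_succ 2 r
              omega⟩ ⟨(j : ℕ) - 1, by have := j.isLt; omega⟩)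

/-- The `l`-th binary digit (`l = 1, …, m`, with `l = 1` the most significant)
of a position `i ∈ Fin (2^m)`; by convention `0` for `l` outside `1, …, m`. -/
def bitv (m : ℕ) (i : Fin (2 ^ m)) (l : ℕ) : ℕ :=
  if 1 ≤ l ∧ l ≤ m ∧ (i : ℕ).testBit (m - l) then 1 else 0

/-- The Hadamard matrix `J^(r)`, defined recursively by
`J^(0) = (1)` and `J^(r+1) = J^(1) ⊗ J^(r)`, i.e. `J^(r+1)` is the `2 × 2`
block matrix `(1/√2) [[J^(r), J^(r)], [J^(r), -J^(r)]]`. -/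
def Jmat : (r : ℕ) → Matrix (Fin (2 ^ r)) (Fin (2 ^ r)) ℂ
  | 0 => 1
  | r + 1 => fun i i' =>
    ((Real.sqrt 2 : ℂ))⁻¹ *
      (if 2 ^ r ≤ (i : ℕ) ∧ 2 ^ r ≤ (i' : ℕ) then -1 else 1) *
      Jmat r ⟨(i : ℕ) % 2 ^ r, Nat.mod_lt _ (Nat.two_pow_pos r)⟩
             ⟨(i' : ℕ) % 2 ^ r, Nat.mod_lt _ (Nat.two_pow_pos r)⟩

/-- The matrix `A_r(α; Θ)` of size `2^r`, with `(ε, δ)` entry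
`exp((π√-1/2)(Σ_i ε_i δ_i α_i + Σ_{j<k} ε_j δ_k θ_{kj}))`, rows and columns
being indexed by `I_r` via the recursive ordering; here `θ_{kj} = Θ k j`. -/
def Amat (r : ℕ) (α : Fin r → ℂ) (Θ : Fin r → Fin r → ℝ) :
    Matrix (Fin (2 ^ r)) (Fin (2 ^ r)) ℂ := fun i i' =>
  Complex.exp (Real.pi * Complex.I / 2 *
    ((∑ a : Fin r, (ord r i a : ℂ) * (ord r i' a : ℂ) * α a) +
     ∑ a : Fin r, ∑ b : Fin r,
       if a < b then (ord r i a : ℂ) * (ord r i' b : ℂ) * (Θ b a : ℂ) else 0))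

/-- The element of `I_r^0 = {ε ∈ {1,-1}^r : ε_1 = 1}` at position
`i ∈ Fin (2^(r-1))`, via the identification of `I_r^0` with `I_{r-1}`
dropping the first coordinate (with the induced ordering). -/
def sgn0 (r : ℕ) (i : Fin (2 ^ (r - 1))) (a : Fin r) : ℤ :=
  if _ : (a : ℕ) = 0 then 1
  else ord (r - 1) i ⟨(a : ℕ) - 1, by have := a.isLt; omega⟩

/-- The matrix `C_r(α; Θ)` of size `2^(r-1)`, with `(ε, δ)` entry
`c(Σ_i ε_i δ_i α_i + Σ_{j<k} ε_j δ_k θ_{kj})` for `ε, δ ∈ I_r^0`. -/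
def Cmat (r : ℕ) (α : Fin r → ℂ) (Θ : Fin r → Fin r → ℝ) :
    Matrix (Fin (2 ^ (r - 1))) (Fin (2 ^ (r - 1))) ℂ := fun i i' =>
  cc ((∑ a : Fin r, (sgn0 r i a : ℂ) * (sgn0 r i' a : ℂ) * α a) +
     ∑ a : Fin r, ∑ b : Fin r,
       if a < b then (sgn0 r i a : ℂ) * (sgn0 r i' b : ℂ) * (Θ b a : ℂ) else 0)

/-- The matrix `S_r(α; Θ)` of size `2^(r-1)`, with `(ε, δ)` entry
`s(Σ_i ε_i δ_i α_i + Σ_{j<k} ε_j δ_k θ_{kj})` for `ε, δ ∈ I_r^0`. -/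
def Smat (r : ℕ) (α : Fin r → ℂ) (Θ : Fin r → Fin r → ℝ) :
    Matrix (Fin (2 ^ (r - 1))) (Fin (2 ^ (r - 1))) ℂ := fun i i' =>
  ss ((∑ a : Fin r, (sgn0 r i a : ℂ) * (sgn0 r i' a : ℂ) * α a) +
     ∑ a : Fin r, ∑ b : Fin r,
       if a < b then (sgn0 r i a : ℂ) * (sgn0 r i' b : ℂ) * (Θ b a : ℂ) else 0)

/-- The `i`-th diagonal entry of the diagonal matrix `D_j^(r)(α)` of size
`2^(r-1)`, defined recursively:
`D_1^(r)(α) = diag(c(α)·I_{2^(r-2)}, s(α)·I_{2^(r-2)})` (for `r = 2` this is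
`diag(c(α), s(α))`), `D_2^(r)(α) = diag(D_1^(r-1)(α), D_1^(r-1)(α+1))`
(for `r = 2` this gives `D_2^(2)(α) = diag(c(α), -s(α))`), and
`D_k^(r)(α) = diag(D_{k-1}^(r-1)(α), D_{k-1}^(r-1)(α))` for `3 ≤ k ≤ r`. -/
def dEnt : (r : ℕ) → (j : ℕ) → ℂ → Fin (2 ^ (r - 1)) → ℂ
  | r, 0, _, _ => 0
  | r, 1, α, i => if (i : ℕ) < 2 ^ (r - 2) then cc α else ss α
  | r, 2, α, i =>
    if h : (i : ℕ) < 2 ^ (r - 2) then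
      dEnt (r - 1) 1 α ⟨(i : ℕ), by
        have h3 : r - 1 - 1 = r - 2 := by omega
        rw [h3]; exact h⟩
    else
      dEnt (r - 1) 1 (α + 1) ⟨(i : ℕ) - 2 ^ (r - 2), by
        have h1 := i.isLt
        have h2 : 2 ^ (r - 1) ≤ 2 * 2 ^ (r - 2) := by
          calc 2 ^ (r - 1) ≤ 2 ^ (r - 2 + 1) :=
                Nat.pow_le_pow_right (by norm_num) (by omega)
            _ = 2 * 2 ^ (r - 2) := by rw [pow_succ]; exact Nat.mul_comm _ _
        have h3 : r - 1 - 1 = r - 2 := by omega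
        rw [h3]; omega⟩
  | r, j + 3, α, i =>
    if h : (i : ℕ) < 2 ^ (r - 2) then
      dEnt (r - 1) (j + 2) α ⟨(i : ℕ), by
        have h3 : r - 1 - 1 = r - 2 := by omega
        rw [h3]; exact h⟩
    else
      dEnt (r - 1) (j + 2) α ⟨(i : ℕ) - 2 ^ (r - 2), by
        have h1 := i.isLt
        have h2 : 2 ^ (r - 1) ≤ 2 * 2 ^ (r - 2) := by
          calc 2 ^ (r - 1) ≤ 2 ^ (r - 2 + 1) :=
                Nat.pow_le_pow_right (by norm_num) (by omega)
            _ = 2 * 2 ^ (r - 2) := by rw [pow_succ]; exact Nat.mul_comm _ _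
        have h3 : r - 1 - 1 = r - 2 := by omega
        rw [h3]; omega⟩

/-- The diagonal matrix `D_j^(r)(α)` of size `2^(r-1)` (`j = 1, …, r`). -/
def Dmat (r j : ℕ) (α : ℂ) : Matrix (Fin (2 ^ (r - 1))) (Fin (2 ^ (r - 1))) ℂ :=
  Matrix.diagonal (dEnt r j α)

/-- The matrix `X_{kj}^(r) = I_{2^(j-1)} ⊗ R₂ ⊗ A₂^{⊗(k-j-1)} ⊗ I_{2^(r-k)}`
of size `2^(r-1)` (`1 ≤ j < k ≤ r`), where `R₂ = [[0,-1],[1,0]]` and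
`A₂ = [[0,1],[1,0]]`, written out entrywise via binary digits (the factors of
the Kronecker product act on the binary digits, the first factor acting on
the most significant digits): the `(i, i')` entry is nonzero iff the digits
of `i` and `i'` agree at the positions `l < j` and `l ≥ k` (the identity
factors) and disagree at the positions `j ≤ l ≤ k-1` (the factors `R₂` and
`A₂`), and the nonzero value is `-1` when the `j`-th digit of `i` is `0`,
and `1` when it is `1` (the factor `R₂`). -/
def Xmat (r j k : ℕ) : Matrix (Fin (2 ^ (r - 1))) (Fin (2 ^ (r - 1))) ℂ :=
  fun i i' =>
    if (∀ l ∈ Finset.range r, (l < j ∨ k ≤ l) → bitv (r - 1) i l = bitv (r - 1) i' l)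
        ∧ (∀ l ∈ Finset.range r, j ≤ l → l < k → bitv (r - 1) i l ≠ bitv (r - 1) i' l)
    then (if bitv (r - 1) i j = 0 then -1 else 1) else 0

/-- The orthogonal matrix `P_{kj}^(r)(θ) = c(θ)·I_{2^(r-1)} + s(θ)·X_{kj}^(r)`. -/
def Pmat (r j k : ℕ) (θ : ℝ) : Matrix (Fin (2 ^ (r - 1))) (Fin (2 ^ (r - 1))) ℂ :=
  cc θ • (1 : Matrix (Fin (2 ^ (r - 1))) (Fin (2 ^ (r - 1))) ℂ) + ss θ • Xmat r j k

lemma two_pow_pred (m : ℕ) (h : 1 ≤ m) : 2 ^ (m - 1) + 2 ^ (m - 1) = 2 ^ m := by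
  have h1 : m - 1 + 1 = m := by omega
  have h2 : 2 ^ (m - 1 + 1) = 2 ^ (m - 1) * 2 := pow_succ 2 (m - 1)
  rw [h1] at h2
  omega

/-- The identification `Fin (2^(m-1)) ⊕ Fin (2^(m-1)) ≃ Fin (2^m)` used to
regard a `2 × 2` block matrix with blocks of size `2^(m-1)` as a matrix of
size `2^m`. -/
def sumEquiv (m : ℕ) (h : 1 ≤ m) : Fin (2 ^ (m - 1)) ⊕ Fin (2 ^ (m - 1)) ≃ Fin (2 ^ m) :=
  finSumFinEquiv.trans (finCongr (two_pow_pred m h))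

/-- The matrix `K̃ = (1/√2) [[I, I], [I, -I]]` of size `2^m`, with
`I = I_{2^(m-1)}`. -/
def Ktilde (m : ℕ) (h : 1 ≤ m) : Matrix (Fin (2 ^ m)) (Fin (2 ^ m)) ℂ :=
  Matrix.reindex (sumEquiv m h) (sumEquiv m h)
    (((Real.sqrt 2 : ℂ))⁻¹ • Matrix.fromBlocks 1 1 1 (-1))

/-!
`X_{kj}^(m)` is a signed permutation matrix: row `i` has its only nonzero entry `±1` in the
column obtained from `i` by flipping the binary digits `j, …, k-1`, the sign being read off
digit `j` (which is flipped). Hence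
`X² = -1`, `Xᵀ = -X`, and the `X_{kj}` commute for fixed `j`, so `θ ↦ P_{kj}(θ)` is a
one-parameter group of commuting matrices with `P_{kj}(θ)ᵀ = P_{kj}(-θ)`; moreover
`P_{k+1,j+1}^(r) = diag(P_{kj}^(r-1), P_{kj}^(r-1))`. With `Q = Π_k P_{k-1,1}^(r-1)(θ_{k2})`
this gives `P_± = Q · Π_k P_{k-1,1}^(r-1)(±θ_{k1})` and `Π_k P_{k2}^(r)(θ_{k2}) = diag(Q, Q)`.
Since `K̃² = 1` and `K̃` commutes with `diag(Q, Q)`, both sides equal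
`diag(Q, Q) · K̃ · diag(Π_k P_{k-1,1}^(r-1)(θ_{k1}), Π_k P_{k-1,1}^(r-1)(-θ_{k1})) · K̃`.
-/

end HomCone

namespace Matrix

variable {n o R : Type*} [DecidableEq n]

def signedPerm [Zero R] (s : n → R) (f : n → n) : Matrix n n R :=
  of fun i i' => if f i = i' then s i else 0

theorem signedPerm_apply [Zero R] (s : n → R) (f : n → n) (i i' : n) :
    signedPerm s f i i' = if f i = i' then s i else 0 :=
  rfl

theorem signedPerm_id [Zero R] (s : n → R) : signedPerm s id = diagonal s := by
  ext i i'
  simp [signedPerm_apply, diagonal_apply]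

theorem signedPerm_neg [NegZeroClass R] (s : n → R) (f : n → n) :
    signedPerm (-s) f = -signedPerm s f := by
  ext i i'
  simp only [signedPerm_apply, neg_apply, Pi.neg_apply]
  split_ifs <;> simp

theorem signedPerm_mul [Fintype n] [NonUnitalNonAssocSemiring R] (s t : n → R) (f g : n → n) :
    signedPerm s f * signedPerm t g = signedPerm (fun i => s i * t (f i)) (g ∘ f) := by
  ext i i'
  simp only [signedPerm_apply, mul_apply, ite_mul, zero_mul]
  simp [mul_ite]

theorem transpose_signedPerm [Zero R] (s : n → R) {f : n → n} (hf : Function.Involutive f) :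
    (signedPerm s f)ᵀ = signedPerm (s ∘ f) f := by
  ext i i'
  rw [transpose_apply, signedPerm_apply, signedPerm_apply]
  by_cases h : f i = i'
  · have h' : f i' = i := by rw [← h, hf]
    simp [h, h']
  · have h' : f i' ≠ i := fun h' => h (by rw [← h', hf])
    simp [h, h']

theorem fromBlocks_signedPerm [DecidableEq o] [Zero R] (s : n → R) (t : o → R) (f : n → n)
    (g : o → o) :
    fromBlocks (signedPerm s f) 0 0 (signedPerm t g) =
      signedPerm (Sum.elim s t) (Sum.map f g) := by
  ext (i | i) (i' | i') <;> simp [signedPerm_apply]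

theorem reindex_signedPerm [DecidableEq o] [Zero R] (e : n ≃ o) (s : n → R) (f : n → n) :
    reindex e e (signedPerm s f) = signedPerm (s ∘ e.symm) (e ∘ f ∘ e.symm) := by
  ext i i'
  simp [signedPerm_apply, ← Equiv.eq_symm_apply]

section Ring

variable [Ring R] {s : n → R}

theorem signedPerm_mul_self [Fintype n] {f : n → n} (hf : Function.Involutive f)
    (hs : ∀ i, s (f i) = -s i) (hs1 : ∀ i, s i * s i = 1) :
    signedPerm s f * signedPerm s f = -1 := by
  have hd : (fun i => s i * s (f i)) = -1 := by
    funext i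
    rw [hs, mul_neg, hs1, Pi.neg_apply, Pi.one_apply]
  rw [signedPerm_mul, hf.comp_self, hd, signedPerm_id, ← diagonal_one, diagonal_neg]
  rfl

theorem transpose_signedPerm_of_neg {f : n → n} (hf : Function.Involutive f)
    (hs : ∀ i, s (f i) = -s i) : (signedPerm s f)ᵀ = -signedPerm s f := by
  rw [transpose_signedPerm s hf, ← signedPerm_neg]
  exact congrArg₂ _ (funext hs) rfl

theorem commute_signedPerm [Fintype n] {f g : n → n} (hfg : f ∘ g = g ∘ f)
    (hf : ∀ i, s (f i) = -s i) (hg : ∀ i, s (g i) = -s i) :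
    Commute (signedPerm s f) (signedPerm s g) := by
  simp only [Commute, SemiconjBy, signedPerm_mul, hf, hg, hfg]

end Ring

theorem fromBlocks_one_one_one_neg_one_mul_self [Fintype n] [Ring R] :
    (fromBlocks 1 1 1 (-1) : Matrix (n ⊕ n) (n ⊕ n) R) * fromBlocks 1 1 1 (-1) =
      (2 : R) • 1 := by
  rw [fromBlocks_multiply, ← fromBlocks_one, fromBlocks_smul]
  simp [two_smul]

variable (n R) in
def fromBlocksDiagAlgHom [Fintype n] [CommSemiring R] :
    Matrix n n R × Matrix n n R →ₐ[R] Matrix (n ⊕ n) (n ⊕ n) R where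
  toFun A := fromBlocks A.1 0 0 A.2
  map_one' := fromBlocks_one
  map_mul' A B := by simp [fromBlocks_multiply]
  map_zero' := fromBlocks_zero
  map_add' A B := by simp [fromBlocks_add]
  commutes' c := by
    simp only [Algebra.algebraMap_eq_smul_one, Prod.smul_fst, Prod.smul_snd, Prod.fst_one,
      Prod.snd_one]
    rw [← fromBlocks_one, fromBlocks_smul, smul_zero]

end Matrix

namespace List

variable {ι M : Type*} [Monoid M]

theorem prod_map_mul_of_commute {l : List ι} {f g : ι → M}
    (h : ∀ i ∈ l, ∀ j ∈ l, Commute (g i) (f j)) :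
    (l.map fun i => f i * g i).prod = (l.map f).prod * (l.map g).prod := by
  induction l with
  | nil => simp
  | cons a l ih =>
    have hga : Commute (g a) (l.map f).prod :=
      Commute.list_prod_right _ _ fun x hx => by
        obtain ⟨j, hj, rfl⟩ := mem_map.1 hx
        exact h a mem_cons_self j (mem_cons_of_mem _ hj)
    simp only [map_cons, prod_cons,
      ih fun i hi j hj => h i (mem_cons_of_mem _ hi) j (mem_cons_of_mem _ hj)]
    rw [mul_assoc, ← mul_assoc (g a), hga.eq, mul_assoc, mul_assoc]

theorem prod_map_conj_of_mul_self {k : M} (hk : k * k = 1) (l : List ι) (f : ι → M) :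
    (l.map fun i => k * f i * k).prod = k * (l.map f).prod * k := by
  induction l with
  | nil => simp [hk]
  | cons a l ih =>
    rw [map_cons, prod_cons, ih, map_cons, prod_cons]
    simp only [mul_assoc]
    rw [← mul_assoc k k, hk, one_mul]

theorem prod_map_prodMk {N : Type*} [Monoid N] (l : List ι) (f : ι → M) (g : ι → N) :
    (l.map fun i => (f i, g i)).prod = ((l.map f).prod, (l.map g).prod) := by
  induction l with
  | nil => rfl
  | cons a l ih => simp [ih]

end List

namespace Nat

theorem eq_xor_iff_testBit {a b c : ℕ} :
    b = a ^^^ c ↔ ∀ p, (a.testBit p = b.testBit p ↔ c.testBit p = false) := by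
  constructor
  · rintro rfl p
    rw [testBit_xor]
    cases a.testBit p <;> cases c.testBit p <;> decide
  · intro h
    refine eq_of_testBit_eq fun p => ?_
    have hp := h p
    rw [testBit_xor]
    cases ha : a.testBit p <;> cases hb : b.testBit p <;> cases hc : c.testBit p <;> simp_all

theorem two_pow_add_xor {n a b : ℕ} (ha : a < 2 ^ n) (hb : b < 2 ^ n) :
    (2 ^ n + a) ^^^ b = 2 ^ n + (a ^^^ b) := by
  rw [← div_add_mod ((2 ^ n + a) ^^^ b) (2 ^ n), xor_div_two_pow, xor_mod_two_pow,
    div_eq_of_lt hb, mod_eq_of_lt hb, add_mod_left, mod_eq_of_lt ha,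
    add_div_left _ (Nat.two_pow_pos n), div_eq_of_lt ha]
  simp

end Nat

namespace HomCone

/-- The set bits `m - k, …, m - j - 1` are the digits `j, …, k - 1` in the numbering of `bitv`. -/
def mask (m j k : ℕ) : ℕ := (2 ^ (k - j) - 1) <<< (m - k)

theorem testBit_mask {m j k : ℕ} (hkm : k ≤ m) (p : ℕ) :
    (mask m j k).testBit p = decide (m - k ≤ p ∧ p < m - j) := by
  rw [mask, Nat.testBit_shiftLeft, Nat.testBit_two_pow_sub_one]
  by_cases h : m - k ≤ p
  · simp only [ge_iff_le, h, decide_true, Bool.true_and, true_and]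
    exact decide_eq_decide.2 (by omega)
  · simp [h]

theorem mask_lt {m j k : ℕ} (hj : 1 ≤ j) (hkm : k ≤ m) : mask m j k < 2 ^ (m - 1) :=
  Nat.lt_pow_two_of_testBit _ fun p hp => by
    rw [testBit_mask hkm]
    exact decide_eq_false (by omega)

theorem mask_succ (r j k : ℕ) : mask r (j + 1) (k + 1) = mask (r - 1) j k := by
  rw [mask, mask, Nat.add_sub_add_right, Nat.sub_sub, add_comm 1 k]

/-- The `else` branch is never taken when `1 ≤ j` and `k ≤ m` (see `coe_flipBits`). -/
def flipBits (m j k : ℕ) (i : Fin (2 ^ (m - 1))) : Fin (2 ^ (m - 1)) :=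
  if h : (i : ℕ) ^^^ mask m j k < 2 ^ (m - 1) then ⟨_, h⟩ else i

section flipBits

variable {m j k : ℕ} (hj : 1 ≤ j) (hkm : k ≤ m)
include hj hkm

theorem coe_flipBits (i : Fin (2 ^ (m - 1))) :
    (flipBits m j k i : ℕ) = (i : ℕ) ^^^ mask m j k := by
  rw [flipBits, dif_pos (Nat.xor_lt_two_pow i.isLt (mask_lt hj hkm))]

theorem flipBits_involutive : Function.Involutive (flipBits m j k) := fun i =>
  Fin.ext <| by
    rw [coe_flipBits hj hkm, coe_flipBits hj hkm, Nat.xor_assoc, Nat.xor_self, Nat.xor_zero]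

theorem flipBits_comm {k' : ℕ} (hk'm : k' ≤ m) :
    flipBits m j k ∘ flipBits m j k' = flipBits m j k' ∘ flipBits m j k :=
  funext fun i => Fin.ext <| by
    simp only [Function.comp_apply, coe_flipBits hj hkm, coe_flipBits hj hk'm, Nat.xor_assoc,
      Nat.xor_comm (mask m j k)]

end flipBits

theorem bitv_eq_bitv_iff {m l : ℕ} (hl : l < m) (i i' : Fin (2 ^ (m - 1))) :
    bitv (m - 1) i l = bitv (m - 1) i' l ↔
      (i : ℕ).testBit (m - 1 - l) = (i' : ℕ).testBit (m - 1 - l) := by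
  rcases Nat.eq_zero_or_pos l with rfl | hl0
  · simp [bitv, Nat.testBit_lt_two_pow i.isLt, Nat.testBit_lt_two_pow i'.isLt]
  · simp only [bitv, Nat.one_le_iff_ne_zero.mpr hl0.ne', show l ≤ m - 1 by omega, true_and]
    cases (i : ℕ).testBit (m - 1 - l) <;> cases (i' : ℕ).testBit (m - 1 - l) <;> simp

theorem Xmat_support_iff {m j k : ℕ} (hj : 1 ≤ j) (hkm : k ≤ m) (i i' : Fin (2 ^ (m - 1))) :
    ((∀ l ∈ Finset.range m, (l < j ∨ k ≤ l) → bitv (m - 1) i l = bitv (m - 1) i' l) ∧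
      (∀ l ∈ Finset.range m, j ≤ l → l < k → bitv (m - 1) i l ≠ bitv (m - 1) i' l)) ↔
      flipBits m j k i = i' := by
  have hmask : ∀ l < m, ((mask m j k).testBit (m - 1 - l) = false ↔ (l < j ∨ k ≤ l)) := by
    intro l hl
    rw [testBit_mask hkm, decide_eq_false_iff_not]
    omega
  rw [Fin.ext_iff, coe_flipBits hj hkm, eq_comm, Nat.eq_xor_iff_testBit]
  simp only [Finset.mem_range]
  constructor
  · rintro ⟨hout, hin⟩ p
    by_cases hp : p < m
    · obtain ⟨l, hl, rfl⟩ : ∃ l < m, p = m - 1 - l := ⟨m - 1 - p, by omega, by omega⟩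
      rw [← bitv_eq_bitv_iff hl, hmask l hl]
      by_cases hc : l < j ∨ k ≤ l
      · exact iff_of_true (hout l hl hc) hc
      · exact iff_of_false (hin l hl (by omega) (by omega)) hc
    · have hlt : ∀ x : Fin (2 ^ (m - 1)), (x : ℕ) < 2 ^ p := fun x =>
        x.isLt.trans_le (Nat.pow_le_pow_right two_pos (by omega))
      rw [Nat.testBit_lt_two_pow (hlt i), Nat.testBit_lt_two_pow (hlt i'), testBit_mask hkm]
      simp only [decide_eq_false_iff_not, true_iff]
      omega
  · intro h
    refine ⟨fun l hl hc => ?_, fun l hl hjl hlk => ?_⟩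
    · rw [bitv_eq_bitv_iff hl, h, hmask l hl]
      exact hc
    · rw [Ne, bitv_eq_bitv_iff hl, h, hmask l hl]
      omega

def sgn (m j : ℕ) (i : Fin (2 ^ (m - 1))) : ℂ := if bitv (m - 1) i j = 0 then -1 else 1

theorem Xmat_eq_signedPerm {m j k : ℕ} (hj : 1 ≤ j) (hkm : k ≤ m) :
    Xmat m j k = Matrix.signedPerm (sgn m j) (flipBits m j k) := by
  ext i i'
  simp only [Xmat, Matrix.signedPerm_apply, Xmat_support_iff hj hkm, sgn]

theorem sgn_flipBits {m j k : ℕ} (hj : 1 ≤ j) (hjk : j < k) (hkm : k ≤ m)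
    (i : Fin (2 ^ (m - 1))) : sgn m j (flipBits m j k i) = -sgn m j i := by
  have hne :=
    ((Xmat_support_iff hj hkm i _).2 rfl).2 j (Finset.mem_range.2 (by omega)) le_rfl hjk
  unfold sgn
  unfold bitv at hne ⊢
  split_ifs at hne ⊢ <;> simp_all

theorem sgn_mul_self (m j : ℕ) (i : Fin (2 ^ (m - 1))) : sgn m j i * sgn m j i = 1 := by
  unfold sgn
  split_ifs <;> norm_num

section Xmat

variable {m j k : ℕ} (hj : 1 ≤ j) (hjk : j < k) (hkm : k ≤ m)
include hj hjk hkm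

theorem Xmat_mul_self : Xmat m j k * Xmat m j k = -1 := by
  rw [Xmat_eq_signedPerm hj hkm]
  exact Matrix.signedPerm_mul_self (flipBits_involutive hj hkm) (sgn_flipBits hj hjk hkm)
    (sgn_mul_self m j)

theorem transpose_Xmat : (Xmat m j k)ᵀ = -Xmat m j k := by
  rw [Xmat_eq_signedPerm hj hkm]
  exact Matrix.transpose_signedPerm_of_neg (flipBits_involutive hj hkm) (sgn_flipBits hj hjk hkm)

theorem Xmat_commute {k' : ℕ} (hjk' : j < k') (hk'm : k' ≤ m) :
    Commute (Xmat m j k) (Xmat m j k') := by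
  rw [Xmat_eq_signedPerm hj hkm, Xmat_eq_signedPerm hj hk'm]
  exact Matrix.commute_signedPerm (flipBits_comm hj hkm hk'm) (sgn_flipBits hj hjk hkm)
    (sgn_flipBits hj hjk' hk'm)

end Xmat

theorem cc_add (a b : ℂ) : cc (a + b) = cc a * cc b - ss a * ss b := by
  rw [cc, cc, cc, ss, ss, mul_add, add_div, Complex.cos_add]

theorem ss_add (a b : ℂ) : ss (a + b) = ss a * cc b + cc a * ss b := by
  rw [cc, cc, ss, ss, ss, mul_add, add_div, Complex.sin_add]

theorem cc_neg (a : ℂ) : cc (-a) = cc a := by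
  rw [cc, cc, mul_neg, neg_div, Complex.cos_neg]

theorem ss_neg (a : ℂ) : ss (-a) = -ss a := by
  rw [ss, ss, mul_neg, neg_div, Complex.sin_neg]

section Pmat

variable {m j k : ℕ} (hj : 1 ≤ j) (hjk : j < k) (hkm : k ≤ m)
include hj hjk hkm

theorem Pmat_add (a b : ℝ) : Pmat m j k (a + b) = Pmat m j k a * Pmat m j k b := by
  simp only [Pmat, add_mul, mul_add, Matrix.smul_mul, Matrix.mul_smul, smul_smul, one_mul,
    mul_one, Xmat_mul_self hj hjk hkm, Complex.ofReal_add, cc_add, ss_add]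
  module

theorem transpose_Pmat (θ : ℝ) : (Pmat m j k θ)ᵀ = Pmat m j k (-θ) := by
  rw [Pmat, Pmat, Matrix.transpose_add, Matrix.transpose_smul, Matrix.transpose_smul,
    Matrix.transpose_one, transpose_Xmat hj hjk hkm, Complex.ofReal_neg, cc_neg, ss_neg]
  module

theorem Pmat_commute {k' : ℕ} (hjk' : j < k') (hk'm : k' ≤ m) (a b : ℝ) :
    Commute (Pmat m j k a) (Pmat m j k' b) := by
  have hX := Xmat_commute hj hjk hkm hjk' hk'm
  exact ((Commute.one_left _).smul_left _).add_left
    ((((Commute.one_right _).smul_right _).add_right (hX.smul_right _)).smul_left _)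

end Pmat

def diagBlocks (m : ℕ) (h : 1 ≤ m) :
    Matrix (Fin (2 ^ (m - 1))) (Fin (2 ^ (m - 1))) ℂ ×
        Matrix (Fin (2 ^ (m - 1))) (Fin (2 ^ (m - 1))) ℂ →ₐ[ℂ]
      Matrix (Fin (2 ^ m)) (Fin (2 ^ m)) ℂ :=
  (Matrix.reindexAlgEquiv ℂ ℂ (sumEquiv m h)).toAlgHom.comp (Matrix.fromBlocksDiagAlgHom _ ℂ)

theorem diagBlocks_apply (m : ℕ) (h : 1 ≤ m)
    (A B : Matrix (Fin (2 ^ (m - 1))) (Fin (2 ^ (m - 1))) ℂ) :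
    diagBlocks m h (A, B) =
      Matrix.reindex (sumEquiv m h) (sumEquiv m h) (Matrix.fromBlocks A 0 0 B) :=
  rfl

theorem coe_sumEquiv_inl (m : ℕ) (h : 1 ≤ m) (a : Fin (2 ^ (m - 1))) :
    (sumEquiv m h (Sum.inl a) : ℕ) = a := by
  simp [sumEquiv]

theorem coe_sumEquiv_inr (m : ℕ) (h : 1 ≤ m) (a : Fin (2 ^ (m - 1))) :
    (sumEquiv m h (Sum.inr a) : ℕ) = 2 ^ (m - 1) + a := by
  simp [sumEquiv, add_comm]

theorem bitv_sumEquiv_succ {m l : ℕ} (h : 1 ≤ m) (hl : 1 ≤ l)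
    (x : Fin (2 ^ (m - 1)) ⊕ Fin (2 ^ (m - 1))) :
    bitv m (sumEquiv m h x) (l + 1) = bitv (m - 1) (Sum.elim id id x) l := by
  have hpos : m - (l + 1) = m - 1 - l := by omega
  by_cases hlm : l ≤ m - 1
  · rcases x with a | a
    · simp [bitv, coe_sumEquiv_inl, hl, hlm, hpos, show l + 1 ≤ m by omega]
    · simp [bitv, coe_sumEquiv_inr, hl, hlm, hpos, show l + 1 ≤ m by omega,
        Nat.testBit_two_pow_add_gt (show m - 1 - l < m - 1 by omega)]
  · simp [bitv, hlm, show ¬ l + 1 ≤ m by omega]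

section succ

variable {r j : ℕ} (h : 1 ≤ r - 1) (hj : 1 ≤ j)
include h hj

theorem sgn_sumEquiv (x : Fin (2 ^ (r - 1 - 1)) ⊕ Fin (2 ^ (r - 1 - 1))) :
    sgn r (j + 1) (sumEquiv (r - 1) h x) = Sum.elim (sgn (r - 1) j) (sgn (r - 1) j) x := by
  rcases x with a | a <;> simp [sgn, bitv_sumEquiv_succ h hj]

variable {k : ℕ} (hkr : k < r)
include hkr

theorem flipBits_sumEquiv (x : Fin (2 ^ (r - 1 - 1)) ⊕ Fin (2 ^ (r - 1 - 1))) :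
    flipBits r (j + 1) (k + 1) (sumEquiv (r - 1) h x) =
      sumEquiv (r - 1) h (Sum.map (flipBits (r - 1) j k) (flipBits (r - 1) j k) x) := by
  have hkm : k ≤ r - 1 := by omega
  apply Fin.ext
  rw [coe_flipBits (by omega) hkr, mask_succ r j k]
  rcases x with a | a
  · simp only [Sum.map_inl, coe_sumEquiv_inl, coe_flipBits hj hkm]
  · simp only [Sum.map_inr, coe_sumEquiv_inr, coe_flipBits hj hkm,
      Nat.two_pow_add_xor a.isLt (mask_lt hj hkm)]

theorem Xmat_succ :
    Xmat r (j + 1) (k + 1) = diagBlocks (r - 1) h (Xmat (r - 1) j k, Xmat (r - 1) j k) := by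
  rw [Xmat_eq_signedPerm (by omega) hkr, Xmat_eq_signedPerm hj (by omega), diagBlocks_apply,
    Matrix.fromBlocks_signedPerm, Matrix.reindex_signedPerm]
  congr 1 <;> funext i <;> obtain ⟨x, rfl⟩ := (sumEquiv (r - 1) h).surjective i
  · simp [sgn_sumEquiv h hj]
  · simp [flipBits_sumEquiv h hj hkr]

theorem Pmat_succ (θ : ℝ) :
    Pmat r (j + 1) (k + 1) θ =
      diagBlocks (r - 1) h (Pmat (r - 1) j k θ, Pmat (r - 1) j k θ) := by
  rw [Pmat, Pmat, Xmat_succ h hj hkr, ← map_one (diagBlocks (r - 1) h), ← map_smul, ← map_smul,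
    ← map_add]
  rfl

end succ

theorem Ktilde_mul_self (m : ℕ) (h : 1 ≤ m) : Ktilde m h * Ktilde m h = 1 := by
  have hc : ((Real.sqrt 2 : ℂ))⁻¹ * ((Real.sqrt 2 : ℂ))⁻¹ * 2 = 1 := by
    rw [← mul_inv, ← Complex.ofReal_mul, Real.mul_self_sqrt zero_le_two]
    norm_num
  rw [Ktilde, ← Matrix.coe_reindexAlgEquiv ℂ ℂ, ← map_mul, Matrix.smul_mul, Matrix.mul_smul,
    smul_smul, Matrix.fromBlocks_one_one_one_neg_one_mul_self, smul_smul, hc, one_smul, map_one]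

theorem Ktilde_commute_diagBlocks (m : ℕ) (h : 1 ≤ m)
    (Q : Matrix (Fin (2 ^ (m - 1))) (Fin (2 ^ (m - 1))) ℂ) :
    Commute (Ktilde m h) (diagBlocks m h (Q, Q)) := by
  rw [Ktilde, diagBlocks_apply, ← Matrix.coe_reindexAlgEquiv ℂ ℂ]
  refine Commute.map (Commute.smul_left ?_ _) _
  simp [Commute, SemiconjBy, Matrix.fromBlocks_multiply]

section listProd

variable {ι : Type*} (l : List ι) (κ : ι → ℕ)

theorem list_prod_map_diagBlocks (m : ℕ) (h : 1 ≤ m)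
    (A B : ι → Matrix (Fin (2 ^ (m - 1))) (Fin (2 ^ (m - 1))) ℂ) :
    (l.map fun t => diagBlocks m h (A t, B t)).prod =
      diagBlocks m h ((l.map A).prod, (l.map B).prod) := by
  rw [← List.prod_map_prodMk, map_list_prod, List.map_map]
  rfl

theorem list_prod_map_Pmat_add {m j : ℕ} (hj : 1 ≤ j) (hκ : ∀ t ∈ l, j < κ t ∧ κ t ≤ m)
    (a b : ι → ℝ) :
    (l.map fun t => Pmat m j (κ t) (a t + b t)).prod =
      (l.map fun t => Pmat m j (κ t) (b t)).prod *
        (l.map fun t => Pmat m j (κ t) (a t)).prod := by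
  rw [List.map_congr_left fun t ht => by rw [add_comm, Pmat_add hj (hκ t ht).1 (hκ t ht).2]]
  exact List.prod_map_mul_of_commute fun t ht s hs =>
    Pmat_commute hj (hκ t ht).1 (hκ t ht).2 (hκ s hs).1 (hκ s hs).2 _ _

theorem list_prod_map_Pmat_succ {r j : ℕ} (h : 1 ≤ r - 1) (hj : 1 ≤ j)
    (hκ : ∀ t ∈ l, κ t < r) (a : ι → ℝ) :
    (l.map fun t => Pmat r (j + 1) (κ t + 1) (a t)).prod =
      diagBlocks (r - 1) h ((l.map fun t => Pmat (r - 1) j (κ t) (a t)).prod,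
        (l.map fun t => Pmat (r - 1) j (κ t) (a t)).prod) := by
  rw [List.map_congr_left fun t ht => Pmat_succ h hj (hκ t ht) (a t),
    list_prod_map_diagBlocks]

theorem list_prod_map_Ktilde_conj {m j : ℕ} (h : 1 ≤ m) (hj : 1 ≤ j)
    (hκ : ∀ t ∈ l, j < κ t ∧ κ t ≤ m) (a : ι → ℝ) :
    (l.map fun t => Ktilde m h *
        Matrix.reindex (sumEquiv m h) (sumEquiv m h)
          (Matrix.fromBlocks (Pmat m j (κ t) (a t)) 0 0 (Pmat m j (κ t) (a t))ᵀ) *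
        Ktilde m h).prod =
      Ktilde m h * diagBlocks m h ((l.map fun t => Pmat m j (κ t) (a t)).prod,
        (l.map fun t => Pmat m j (κ t) (-a t)).prod) * Ktilde m h := by
  rw [List.map_congr_left fun t ht => by
      rw [transpose_Pmat hj (hκ t ht).1 (hκ t ht).2, ← diagBlocks_apply],
    List.prod_map_conj_of_mul_self (Ktilde_mul_self m h), list_prod_map_diagBlocks]

end listProd

/-- for `r ≥ 3` and real `θ_{k1}, θ_{k2}` (`k = 3, …, r`),
`K̃ · diag(P₊, P₋) · K̃
  = Π_{k=3}^r P_{k2}^(r)(θ_{k2}) · Π_{k=3}^r [K̃ · diag(P_{k-1,1}^(r-1)(θ_{k1}),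
      (P_{k-1,1}^(r-1)(θ_{k1}))ᵀ) · K̃]`,
where `P_± = Π_{k=3}^r P_{k-1,1}^(r-1)(±θ_{k1} + θ_{k2})`. -/
theorem statement6 (r : ℕ) (hr : 3 ≤ r) (θ₁ θ₂ : ℕ → ℝ) :
    Ktilde (r - 1) (by omega) *
        (Matrix.reindex (sumEquiv (r - 1) (by omega)) (sumEquiv (r - 1) (by omega))
          (Matrix.fromBlocks
            (((List.range (r - 2)).map
                (fun t => Pmat (r - 1) 1 (t + 2) (θ₁ (t + 3) + θ₂ (t + 3)))).prod) 0 0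
            (((List.range (r - 2)).map
                (fun t => Pmat (r - 1) 1 (t + 2) (-θ₁ (t + 3) + θ₂ (t + 3)))).prod))) *
        Ktilde (r - 1) (by omega) =
      (((List.range (r - 2)).map (fun t => Pmat r 2 (t + 3) (θ₂ (t + 3)))).prod) *
        (((List.range (r - 2)).map (fun t =>
            Ktilde (r - 1) (by omega) *
              (Matrix.reindex (sumEquiv (r - 1) (by omega)) (sumEquiv (r - 1) (by omega))
                (Matrix.fromBlocks (Pmat (r - 1) 1 (t + 2) (θ₁ (t + 3))) 0 0
                  (Pmat (r - 1) 1 (t + 2) (θ₁ (t + 3)))ᵀ)) *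
              Ktilde (r - 1) (by omega))).prod) := by
  have h : 1 ≤ r - 1 := by omega
  have hκ : ∀ t ∈ List.range (r - 2), 1 < t + 2 ∧ t + 2 ≤ r - 1 := fun t ht => by
    have := List.mem_range.1 ht
    omega
  rw [list_prod_map_Pmat_add _ _ le_rfl hκ, list_prod_map_Pmat_add _ _ le_rfl hκ,
    list_prod_map_Pmat_succ _ (fun t => t + 2) h le_rfl fun t ht => (hκ t ht).2.trans_lt (by omega),
    list_prod_map_Ktilde_conj _ _ h le_rfl hκ, ← diagBlocks_apply, ← Prod.mk_mul_mk, map_mul,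
    mul_assoc, mul_assoc, ← mul_assoc (Ktilde _ _), (Ktilde_commute_diagBlocks _ h _).eq]
  simp only [mul_assoc]

end HomCone
end
end

section
/- Let r ≥ 3, 3 ≤ k ≤ r, θ ∈ ℝ, and α ∈ ℂ. With K̃ = (1/√2)[[I, I], [I, -I]], I = I_{2^{r-2}}, one has K̃ · diag(P_{k-1,1}^(r-1)(θ), transpose(P_{k-1,1}^(r-1)(θ))) · K̃ · D_2^(r)(α) = D_2^(r)(α) · P_{k1}^(r)(θ). -/
/-!
Common definitions for zeta functions associated with homogeneous cones
(following Nakashima, "Functional equations of zeta functions associated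
with homogeneous cones"): the functions `c(z) = cos (π z / 2)`,
`s(z) = sin (π z / 2)`, the recursive ordering of the sign set
`I_r = {1,-1}^r`, the Hadamard matrices `J^(r)`, the gamma-matrix
`A_r(α; Θ)`, the matrices `C_r`, `S_r`, the diagonal matrices `D_j^(r)(α)`,
and the rotation matrices `P_{kj}^(r)(θ) = c(θ)·I + s(θ)·X_{kj}^(r)`.
Matrices indexed by `I_s` are identified with `2^s × 2^s` matrices via the
recursive ordering, which is encoded by `ord s : Fin (2^s) → (Fin s → ℤ)`,
sending a position to the corresponding sign vector.
-/

noncomputable section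
open Matrix Complex

/-!
Conjugating `diag(P, Pᵀ)` by the Hadamard block matrix `K̃` gives `(P + Pᵀ)/2` on the diagonal
and `(P - Pᵀ)/2` off it; as `X_{k-1,1}^(r-1)` is antisymmetric, this is
`c(θ)·I + s(θ)·[[0, X'], [X', 0]]` with `X' = X_{k-1,1}^(r-1)`. The matrix `[[0, X'], [X', 0]]`
has the same support as `X_{k1}^(r)`: pairs of positions whose two leading binary digits both
differ, the remaining digits being related as for `X'`. On that support the two matrices
differ only in sign, `X_{k1}^(r)` reading it off the leading digit and the block matrix off the
second one, while the entries `c(α), s(α), -s(α), c(α)` of `D_2^(r)(α)` depend only on these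
two digits; a check of the four cases gives
`[[0, X'], [X', 0]] · D_2^(r)(α) = D_2^(r)(α) · X_{k1}^(r)`.
-/

namespace HomCone

lemma cc_add_one (z : ℂ) : cc (z + 1) = -ss z := by
  rw [cc, ss, show (Real.pi : ℂ) * (z + 1) / 2 = Real.pi * z / 2 + Real.pi / 2 by ring,
    Complex.cos_add_pi_div_two]

lemma ss_add_one (z : ℂ) : ss (z + 1) = cc z := by
  rw [cc, ss, show (Real.pi : ℂ) * (z + 1) / 2 = Real.pi * z / 2 + Real.pi / 2 by ring,
    Complex.sin_add_pi_div_two]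

section Bits

variable {m : ℕ}

lemma bitv_zero (i : Fin (2 ^ m)) : bitv m i 0 = 0 := by simp [bitv]

lemma bitv_eq_zero_or_eq_one (i : Fin (2 ^ m)) (l : ℕ) : bitv m i l = 0 ∨ bitv m i l = 1 := by
  unfold bitv; split_ifs <;> simp

lemma bitv_one (i : Fin (2 ^ m)) : bitv m i 1 = if 2 ^ (m - 1) ≤ (i : ℕ) then 1 else 0 := by
  rcases Nat.eq_zero_or_pos m with rfl | hm
  · simp [bitv, Fin.fin_one_eq_zero i]
  have hi : (i : ℕ) < 2 ^ (m - 1 + 1) := by rw [Nat.sub_add_cancel hm]; exact i.isLt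
  by_cases h : 2 ^ (m - 1) ≤ (i : ℕ)
  · simp [bitv, h, hm.ne', Nat.testBit_of_two_pow_le_and_two_pow_add_one_gt h hi]
  · simp [bitv, h, Nat.testBit_lt_two_pow (not_le.mp h)]

def lowBits (m : ℕ) (i : Fin (2 ^ m)) : Fin (2 ^ (m - 1)) :=
  ⟨(i : ℕ) % 2 ^ (m - 1), Nat.mod_lt _ (Nat.two_pow_pos _)⟩

lemma bitv_lowBits (i : Fin (2 ^ m)) {l : ℕ} (hl : 1 ≤ l) :
    bitv (m - 1) (lowBits m i) l = bitv m i (l + 1) := by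
  by_cases hlm : l + 1 ≤ m
  · have hsub : m - 1 - l = m - (l + 1) := by omega
    simp [bitv, lowBits, hsub, show m - (l + 1) < m - 1 by omega, hlm, hl,
      show l ≤ m - 1 by omega]
  · simp [bitv, hlm, show ¬ l ≤ m - 1 by omega]

lemma sumEquiv_symm_apply (h : 1 ≤ m) (i : Fin (2 ^ m)) :
    (sumEquiv m h).symm i =
      if bitv m i 1 = 0 then Sum.inl (lowBits m i) else Sum.inr (lowBits m i) := by
  have hi := i.isLt
  have hpow := two_pow_pred m h
  rw [Equiv.symm_apply_eq, bitv_one]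
  by_cases hle : 2 ^ (m - 1) ≤ (i : ℕ)
  · simp only [hle, if_true, one_ne_zero, if_false]
    ext
    simp only [sumEquiv, lowBits, Equiv.trans_apply, finSumFinEquiv_apply_right,
      Fin.natAdd_eq_addNat, Fin.addNat_mk, finCongr_apply, Fin.cast_mk, Nat.mod_eq_sub_mod hle,
      Nat.mod_eq_of_lt (show (i : ℕ) - 2 ^ (m - 1) < 2 ^ (m - 1) by omega)]
    omega
  · simp only [hle, if_false, if_true]
    ext
    simp [sumEquiv, lowBits, Nat.mod_eq_of_lt (not_le.mp hle)]

end Bits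

lemma dEnt_two {r : ℕ} (hr : 2 ≤ r) (α : ℂ) (i : Fin (2 ^ (r - 1))) :
    dEnt r 2 α i =
      if bitv (r - 1) i 1 = 0 then (if bitv (r - 1) i 2 = 0 then cc α else ss α)
      else (if bitv (r - 1) i 2 = 0 then -ss α else cc α) := by
  have hi := i.isLt
  have hpow := two_pow_pred (r - 1) (by omega)
  rw [← bitv_lowBits i le_rfl, bitv_one, bitv_one, lowBits]
  simp only [Nat.sub_sub, Nat.reduceAdd] at hpow ⊢
  unfold dEnt
  by_cases hle : 2 ^ (r - 2) ≤ (i : ℕ)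
  · rw [dif_neg (not_lt.mpr hle), Nat.mod_eq_sub_mod hle, Nat.mod_eq_of_lt (by omega)]
    simp [dEnt, cc_add_one, ss_add_one, Nat.sub_sub, not_lt.mpr hle]
  · rw [dif_pos (not_le.mp hle), Nat.mod_eq_of_lt (not_le.mp hle)]
    simp [dEnt, Nat.sub_sub, hle]

section Xmat

variable {m j k : ℕ}

def XmatSupport (m j k : ℕ) (i i' : Fin (2 ^ (m - 1))) : Prop :=
  (∀ l ∈ Finset.range m, (l < j ∨ k ≤ l) → bitv (m - 1) i l = bitv (m - 1) i' l) ∧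
    (∀ l ∈ Finset.range m, j ≤ l → l < k → bitv (m - 1) i l ≠ bitv (m - 1) i' l)

lemma Xmat_apply_of_XmatSupport {i i' : Fin (2 ^ (m - 1))} (h : XmatSupport m j k i i') :
    Xmat m j k i i' = if bitv (m - 1) i j = 0 then -1 else 1 :=
  if_pos h

lemma Xmat_apply_of_not_XmatSupport {i i' : Fin (2 ^ (m - 1))} (h : ¬XmatSupport m j k i i') :
    Xmat m j k i i' = 0 :=
  if_neg h

lemma XmatSupport.symm {i i' : Fin (2 ^ (m - 1))} (h : XmatSupport m j k i i') :
    XmatSupport m j k i' i :=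
  ⟨fun l hl hout => (h.1 l hl hout).symm, fun l hl hjl hlk => (h.2 l hl hjl hlk).symm⟩

lemma XmatSupport.bitv_ne {i i' : Fin (2 ^ (m - 1))} (h : XmatSupport m j k i i')
    (hjk : j < k) (hjm : j < m) : bitv (m - 1) i j ≠ bitv (m - 1) i' j :=
  h.2 j (Finset.mem_range.mpr hjm) le_rfl hjk

lemma Xmat_eq_zero_of_bitv_eq (hjk : j < k) (hjm : j < m) {i i' : Fin (2 ^ (m - 1))}
    (h : bitv (m - 1) i j = bitv (m - 1) i' j) : Xmat m j k i i' = 0 :=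
  Xmat_apply_of_not_XmatSupport fun hS => hS.bitv_ne hjk hjm h

lemma Xmat_transpose (hjk : j < k) (hjm : j < m) : (Xmat m j k)ᵀ = -Xmat m j k := by
  ext i i'
  rw [transpose_apply, neg_apply]
  by_cases hS : XmatSupport m j k i i'
  · rw [Xmat_apply_of_XmatSupport hS, Xmat_apply_of_XmatSupport hS.symm]
    have hne := hS.bitv_ne hjk hjm
    rcases bitv_eq_zero_or_eq_one i j with h | h <;>
      rcases bitv_eq_zero_or_eq_one i' j with h' | h' <;> simp_all
  · rw [Xmat_apply_of_not_XmatSupport hS,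
      Xmat_apply_of_not_XmatSupport fun hS' => hS hS'.symm, neg_zero]

lemma Pmat_transpose (hjk : j < k) (hjm : j < m) (θ : ℝ) :
    (Pmat m j k θ)ᵀ = cc θ • 1 - ss θ • Xmat m j k := by
  rw [Pmat, transpose_add, transpose_smul, transpose_smul, transpose_one, Xmat_transpose hjk hjm,
    smul_neg, sub_eq_add_neg]

lemma XmatSupport_iff_lowBits (hk : 2 ≤ k) {i i' : Fin (2 ^ (m - 1))}
    (htop : bitv (m - 1) i 1 ≠ bitv (m - 1) i' 1) :
    XmatSupport m 1 k i i' ↔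
      XmatSupport (m - 1) 1 (k - 1) (lowBits (m - 1) i) (lowBits (m - 1) i') := by
  constructor
  · rintro ⟨heq, hne⟩
    refine ⟨fun l hl hout => ?_, fun l hl h1l hlk => ?_⟩
    · rcases Nat.eq_zero_or_pos l with rfl | hl0
      · rw [bitv_zero, bitv_zero]
      rw [bitv_lowBits i hl0, bitv_lowBits i' hl0]
      exact heq (l + 1) (by simp only [Finset.mem_range] at hl ⊢; omega) (by omega)
    · rw [bitv_lowBits i h1l, bitv_lowBits i' h1l]
      exact hne (l + 1) (by simp only [Finset.mem_range] at hl ⊢; omega) (by omega) (by omega)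
  · rintro ⟨heq, hne⟩
    refine ⟨fun l hl hout => ?_, fun l hl h1l hlk => ?_⟩
    · obtain _ | l := l
      · rw [bitv_zero, bitv_zero]
      rw [← bitv_lowBits i (by omega), ← bitv_lowBits i' (by omega)]
      exact heq l (by simp only [Finset.mem_range] at hl ⊢; omega) (by omega)
    · obtain _ | _ | l := l
      · omega
      · exact htop
      rw [← bitv_lowBits i (by omega), ← bitv_lowBits i' (by omega)]
      exact hne (l + 1) (by simp only [Finset.mem_range] at hl ⊢; omega) (by omega) (by omega)

end Xmat

lemma sign_mul_dEnt_two_of_bitv_ne {r : ℕ} (hr : 2 ≤ r) (α : ℂ) {i i' : Fin (2 ^ (r - 1))}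
    (h1 : bitv (r - 1) i 1 ≠ bitv (r - 1) i' 1) (h2 : bitv (r - 1) i 2 ≠ bitv (r - 1) i' 2) :
    (if bitv (r - 1) i 2 = 0 then -1 else 1) * dEnt r 2 α i' =
      dEnt r 2 α i * (if bitv (r - 1) i 1 = 0 then -1 else 1) := by
  rw [dEnt_two hr, dEnt_two hr]
  rcases bitv_eq_zero_or_eq_one i 1 with h | h <;>
    rcases bitv_eq_zero_or_eq_one i' 1 with h' | h' <;>
    rcases bitv_eq_zero_or_eq_one i 2 with g | g <;>
    rcases bitv_eq_zero_or_eq_one i' 2 with g' | g' <;> simp_all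

lemma fromBlocks_Xmat_mul_Dmat {r k : ℕ} (hk : 3 ≤ k) (hkr : k ≤ r) (h : 1 ≤ r - 1)
    (α : ℂ) :
    (fromBlocks 0 (Xmat (r - 1) 1 (k - 1)) (Xmat (r - 1) 1 (k - 1)) 0).submatrix
        (sumEquiv (r - 1) h).symm (sumEquiv (r - 1) h).symm * Dmat r 2 α =
      Dmat r 2 α * Xmat r 1 k := by
  ext i i'
  rw [Dmat, mul_diagonal, diagonal_mul, submatrix_apply, sumEquiv_symm_apply, sumEquiv_symm_apply]
  by_cases htop : bitv (r - 1) i 1 = bitv (r - 1) i' 1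
  · rw [Xmat_eq_zero_of_bitv_eq (by omega) (by omega) htop, mul_zero]
    rcases bitv_eq_zero_or_eq_one i 1 with h | h <;> simp [h, ← htop]
  have hblock : fromBlocks 0 (Xmat (r - 1) 1 (k - 1)) (Xmat (r - 1) 1 (k - 1)) 0
      (if bitv (r - 1) i 1 = 0 then .inl (lowBits (r - 1) i) else .inr (lowBits (r - 1) i))
      (if bitv (r - 1) i' 1 = 0 then .inl (lowBits (r - 1) i') else .inr (lowBits (r - 1) i')) =
      Xmat (r - 1) 1 (k - 1) (lowBits (r - 1) i) (lowBits (r - 1) i') := by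
    rcases bitv_eq_zero_or_eq_one i 1 with h | h <;>
      rcases bitv_eq_zero_or_eq_one i' 1 with h' | h' <;> simp_all
  rw [hblock]
  by_cases hS : XmatSupport (r - 1) 1 (k - 1) (lowBits (r - 1) i) (lowBits (r - 1) i')
  · have hne := hS.bitv_ne (by omega) (by omega)
    rw [bitv_lowBits i le_rfl, bitv_lowBits i' le_rfl] at hne
    rw [Xmat_apply_of_XmatSupport hS,
      Xmat_apply_of_XmatSupport ((XmatSupport_iff_lowBits (by omega) htop).mpr hS),
      bitv_lowBits i le_rfl]
    exact sign_mul_dEnt_two_of_bitv_ne (by omega) α htop hne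
  · rw [Xmat_apply_of_not_XmatSupport hS,
      Xmat_apply_of_not_XmatSupport (mt (XmatSupport_iff_lowBits (by omega) htop).mp hS),
      zero_mul, mul_zero]

lemma hadamard_conj_fromBlocks {n : Type*} [Fintype n] [DecidableEq n] (A B : Matrix n n ℂ) :
    ((Real.sqrt 2 : ℂ)⁻¹ • fromBlocks 1 1 1 (-1)) * fromBlocks A 0 0 B *
        ((Real.sqrt 2 : ℂ)⁻¹ • fromBlocks 1 1 1 (-1)) =
      (2⁻¹ : ℂ) • fromBlocks (A + B) (A - B) (A - B) (A + B) := by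
  have hsqrt : (Real.sqrt 2 : ℂ)⁻¹ * (Real.sqrt 2 : ℂ)⁻¹ = 2⁻¹ := by
    rw [← mul_inv, ← Complex.ofReal_mul, Real.mul_self_sqrt zero_le_two]
    norm_num
  rw [smul_mul_assoc, smul_mul_assoc, mul_smul_comm, smul_smul, hsqrt, fromBlocks_multiply,
    fromBlocks_multiply]
  simp only [Matrix.one_mul, Matrix.mul_one, Matrix.mul_zero, add_zero, zero_add,
    Matrix.neg_mul, Matrix.mul_neg, neg_neg, sub_eq_add_neg]

lemma hadamard_conj_fromBlocks_Pmat {m k : ℕ} (hk : 2 ≤ k) (hm : 2 ≤ m) (θ : ℝ) :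
    ((Real.sqrt 2 : ℂ)⁻¹ • fromBlocks 1 1 1 (-1)) *
        fromBlocks (Pmat m 1 k θ) 0 0 (Pmat m 1 k θ)ᵀ *
        ((Real.sqrt 2 : ℂ)⁻¹ • fromBlocks 1 1 1 (-1)) =
      cc θ • 1 + ss θ • fromBlocks 0 (Xmat m 1 k) (Xmat m 1 k) 0 := by
  rw [hadamard_conj_fromBlocks, Pmat_transpose (by omega) (by omega), Pmat, ← fromBlocks_one,
    fromBlocks_smul, fromBlocks_smul, fromBlocks_smul, fromBlocks_add, fromBlocks_inj]
  refine ⟨?_, ?_, ?_, ?_⟩ <;> module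

/-- for `3 ≤ k ≤ r`,
`K̃ · diag(P_{k-1,1}^(r-1)(θ), (P_{k-1,1}^(r-1)(θ))ᵀ) · K̃ · D_2^(r)(α)
  = D_2^(r)(α) · P_{k1}^(r)(θ)`. -/
theorem statement7 (r k : ℕ) (hk3 : 3 ≤ k) (hkr : k ≤ r) (θ : ℝ) (α : ℂ) :
    Ktilde (r - 1) (by omega) *
        (Matrix.reindex (sumEquiv (r - 1) (by omega)) (sumEquiv (r - 1) (by omega))
          (Matrix.fromBlocks (Pmat (r - 1) 1 (k - 1) θ) 0 0 (Pmat (r - 1) 1 (k - 1) θ)ᵀ)) *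
        Ktilde (r - 1) (by omega) * Dmat r 2 α =
      Dmat r 2 α * Pmat r 1 k θ := by
  simp only [Ktilde, reindex_apply]
  rw [submatrix_mul_equiv, submatrix_mul_equiv, hadamard_conj_fromBlocks_Pmat (by omega) (by omega)]
  simp only [submatrix_add, submatrix_smul, Pi.add_apply, Pi.smul_apply]
  rw [submatrix_one_equiv, add_mul, smul_mul_assoc, smul_mul_assoc, Matrix.one_mul,
    fromBlocks_Xmat_mul_Dmat hk3 hkr, Pmat, mul_add, mul_smul_comm, mul_smul_comm, Matrix.mul_one]

end HomCone
end
end
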